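/- arXiv:2003.14387 — 2 statements merged into one kernel-verified Lean document; each statement's English description precedes it below -/
import Mathlib

section
/- Let H be a complex Hilbert space, A a positive bounded self-adjoint operator on H, and X a bounded linear operator on H satisfying AX = X*A. Then for every x ∈ H, ⟨AXx, Xx⟩ ≤ ‖X‖² ⟨Ax, x⟩. -/
/-!
Since `A X = X* A`, the operator `X` is symmetric for the semi-inner product `⟪A ·, ·⟫`, so
by Cauchy–Schwarz the numbers `aₙ = ⟪A Xⁿ x, Xⁿ x⟫` satisfy `aₙ₊₁² ≤ aₙ aₙ₊₂`. The ratios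
`aₙ₊₁ / aₙ` of such a log-convex sequence are nondecreasing, so `aₙ ≥ a₀ (a₁ / a₀)ⁿ`; on the
other hand `aₙ ≤ ‖A‖ ‖x‖² ‖X‖²ⁿ`, and comparing the growth rates gives `a₁ ≤ ‖X‖² a₀`.
-/

open scoped InnerProductSpace

theorem le_of_forall_pow_mul_le_mul_pow {x b c C : ℝ} (hc : 0 < c) (hb : 0 ≤ b)
    (h : ∀ n : ℕ, x ^ n * c ≤ C * b ^ n) : x ≤ b := by
  by_contra! hbx
  have hx : 0 < x := hb.trans_lt hbx
  have hC : 0 < C := hc.trans_le (by simpa using h 0)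
  obtain ⟨n, hn⟩ := exists_pow_lt_of_lt_one (div_pos hc hC) ((div_lt_one hx).2 hbx)
  rw [div_pow, div_lt_div_iff₀ (by positivity) hC] at hn
  nlinarith [h n, pow_pos hx n]

section LogConvex

variable {a : ℕ → ℝ} (ha : ∀ n, 0 ≤ a n) (hlc : ∀ n, a (n + 1) ^ 2 ≤ a n * a (n + 2))
include ha hlc

theorem mul_le_mul_succ_of_sq_le (n : ℕ) : a 1 * a n ≤ a 0 * a (n + 1) := by
  induction n with
  | zero => rw [mul_comm]
  | succ n ih =>
    rcases (ha (n + 1)).eq_or_lt with h | h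
    · rw [← h, mul_zero]
      exact mul_nonneg (ha 0) (ha _)
    refine le_of_mul_le_mul_left ?_ h
    calc a (n + 1) * (a 1 * a (n + 1)) = a 1 * a (n + 1) ^ 2 := by ring
      _ ≤ a 1 * (a n * a (n + 2)) := mul_le_mul_of_nonneg_left (hlc n) (ha 1)
      _ = a 1 * a n * a (n + 2) := by ring
      _ ≤ a 0 * a (n + 1) * a (n + 2) := mul_le_mul_of_nonneg_right ih (ha _)
      _ = a (n + 1) * (a 0 * a (n + 2)) := by ring

theorem pow_mul_le_pow_mul_of_sq_le (n : ℕ) : a 1 ^ n * a 0 ≤ a 0 ^ n * a n := by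
  induction n with
  | zero => simp
  | succ n ih =>
    calc a 1 ^ (n + 1) * a 0 = a 1 * (a 1 ^ n * a 0) := by ring
      _ ≤ a 1 * (a 0 ^ n * a n) := mul_le_mul_of_nonneg_left ih (ha 1)
      _ = a 0 ^ n * (a 1 * a n) := by ring
      _ ≤ a 0 ^ n * (a 0 * a (n + 1)) :=
          mul_le_mul_of_nonneg_left (mul_le_mul_succ_of_sq_le ha hlc n) (pow_nonneg (ha 0) n)
      _ = a 0 ^ (n + 1) * a (n + 1) := by ring

theorem le_mul_of_sq_le_of_le_mul_pow {C r : ℝ} (hr : 0 ≤ r) (hgrow : ∀ n, a n ≤ C * r ^ n) :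
    a 1 ≤ r * a 0 := by
  rcases (ha 0).eq_or_lt with h0 | h0
  · have h1 : a 1 ^ 2 ≤ 0 := by simpa [← h0] using hlc 0
    rw [← h0, mul_zero]
    exact (pow_eq_zero_iff two_ne_zero).1 (h1.antisymm (sq_nonneg _)) |>.le
  refine le_of_forall_pow_mul_le_mul_pow (C := C) h0 (mul_nonneg hr h0.le) fun n => ?_
  calc a 1 ^ n * a 0 ≤ a 0 ^ n * a n := pow_mul_le_pow_mul_of_sq_le ha hlc n
    _ ≤ a 0 ^ n * (C * r ^ n) := mul_le_mul_of_nonneg_left (hgrow n) (pow_nonneg (ha 0) n)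
    _ = C * (r * a 0) ^ n := by ring

end LogConvex

namespace ContinuousLinearMap

open RCLike

variable {𝕜 E : Type*} [RCLike 𝕜] [NormedAddCommGroup E] [InnerProductSpace 𝕜 E]

theorem re_inner_apply_self_le (T : E →L[𝕜] E) (u : E) : re ⟪T u, u⟫_𝕜 ≤ ‖T‖ * ‖u‖ ^ 2 :=
  calc re ⟪T u, u⟫_𝕜 ≤ ‖T u‖ * ‖u‖ := re_inner_le_norm _ _
    _ ≤ ‖T‖ * ‖u‖ * ‖u‖ := mul_le_mul_of_nonneg_right (T.le_opNorm u) (norm_nonneg u)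
    _ = ‖T‖ * ‖u‖ ^ 2 := by ring

theorem norm_iterate_apply_le (X : E →L[𝕜] E) (u : E) (n : ℕ) : ‖X^[n] u‖ ≤ ‖X‖ ^ n * ‖u‖ := by
  induction n with
  | zero => simp
  | succ n ih =>
    calc ‖X^[n + 1] u‖ = ‖X (X^[n] u)‖ := by rw [Function.iterate_succ_apply']
      _ ≤ ‖X‖ * (‖X‖ ^ n * ‖u‖) := X.le_opNorm_of_le ih
      _ = ‖X‖ ^ (n + 1) * ‖u‖ := by ring

theorem inner_apply_comp_eq_of_comp_eq_adjoint_comp [CompleteSpace E] {T X : E →L[𝕜] E}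
    (h : T ∘L X = adjoint X ∘L T) (u v : E) : ⟪T (X u), v⟫_𝕜 = ⟪T u, X v⟫_𝕜 := by
  rw [← comp_apply, h, comp_apply, adjoint_inner_left]

namespace IsPositive

variable {T : E →L[𝕜] E} (hT : T.IsPositive)
include hT

theorem norm_inner_sq_le (u v : E) : ‖⟪T u, v⟫_𝕜‖ ^ 2 ≤ re ⟪T u, u⟫_𝕜 * re ⟪T v, v⟫_𝕜 := by
  let c : PreInnerProductSpace.Core 𝕜 E :=
    { inner u v := ⟪T u, v⟫_𝕜
      conj_inner_symm u v := by rw [hT.inner_left_eq_inner_right, inner_conj_symm]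
      re_inner_nonneg := hT.re_inner_nonneg_left
      add_left u v w := by simp only [map_add, inner_add_left]
      smul_left u v r := by simp only [map_smul, inner_smul_left] }
  have h : ‖⟪T u, v⟫_𝕜‖ * ‖⟪T v, u⟫_𝕜‖ ≤ re ⟪T u, u⟫_𝕜 * re ⟪T v, v⟫_𝕜 :=
    InnerProductSpace.Core.inner_mul_inner_self_le (c := c) u v
  rwa [hT.inner_left_eq_inner_right v, norm_inner_symm v (T u), ← sq] at h

theorem re_inner_apply_sq_le {X : E → E} (hX : ∀ u v, ⟪T (X u), v⟫_𝕜 = ⟪T u, X v⟫_𝕜) (u : E) :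
    re ⟪T (X u), X u⟫_𝕜 ^ 2 ≤ re ⟪T u, u⟫_𝕜 * re ⟪T (X (X u)), X (X u)⟫_𝕜 :=
  calc re ⟪T (X u), X u⟫_𝕜 ^ 2 ≤ ‖⟪T u, X (X u)⟫_𝕜‖ ^ 2 := by
        rw [hX, ← sq_abs]
        exact pow_le_pow_left₀ (abs_nonneg _) (abs_re_le_norm _) 2
    _ ≤ re ⟪T u, u⟫_𝕜 * re ⟪T (X (X u)), X (X u)⟫_𝕜 := hT.norm_inner_sq_le _ _

theorem re_inner_apply_le {X : E →L[𝕜] E} (hX : ∀ u v, ⟪T (X u), v⟫_𝕜 = ⟪T u, X v⟫_𝕜) (x : E) :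
    re ⟪T (X x), X x⟫_𝕜 ≤ ‖X‖ ^ 2 * re ⟪T x, x⟫_𝕜 := by
  set a : ℕ → ℝ := fun n => re ⟪T (X^[n] x), X^[n] x⟫_𝕜
  have hlc (n : ℕ) : a (n + 1) ^ 2 ≤ a n * a (n + 2) := by
    simpa only [a, Function.iterate_succ_apply'] using hT.re_inner_apply_sq_le hX (X^[n] x)
  have hgrow (n : ℕ) : a n ≤ ‖T‖ * ‖x‖ ^ 2 * (‖X‖ ^ 2) ^ n :=
    calc a n ≤ ‖T‖ * ‖X^[n] x‖ ^ 2 := T.re_inner_apply_self_le _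
      _ ≤ ‖T‖ * (‖X‖ ^ n * ‖x‖) ^ 2 := by gcongr; exact X.norm_iterate_apply_le x n
      _ = ‖T‖ * ‖x‖ ^ 2 * (‖X‖ ^ 2) ^ n := by ring
  exact le_mul_of_sq_le_of_le_mul_pow (fun n => hT.re_inner_nonneg_left _) hlc (by positivity) hgrow

end IsPositive

end ContinuousLinearMap

/-- If `A` is a positive bounded self-adjoint operator and `X` a bounded
operator with `A X = X* A`, then `⟨A X x, X x⟩ ≤ ‖X‖² ⟨A x, x⟩` for every `x`. -/
theorem stmt0 {H : Type*} [NormedAddCommGroup H] [InnerProductSpace ℂ H] [CompleteSpace H]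
    (A X : H →L[ℂ] H) (hA : IsSelfAdjoint A)
    (hApos : ∀ x : H, 0 ≤ (⟪A x, x⟫_ℂ).re)
    (hsym : A ∘L X = (ContinuousLinearMap.adjoint X) ∘L A) :
    ∀ x : H, (⟪A (X x), X x⟫_ℂ).re ≤ ‖X‖ ^ 2 * (⟪A x, x⟫_ℂ).re :=
  (ContinuousLinearMap.isPositive_def'.2 ⟨hA, hApos⟩).re_inner_apply_le
    (ContinuousLinearMap.inner_apply_comp_eq_of_comp_eq_adjoint_comp hsym)
end

section
/- Let H be a complex Hilbert space, A a positive bounded self-adjoint operator on H, and X a bounded linear operator satisfying AX = X*A. Then for every x ∈ H with ⟨Ax,x⟩ ≠ 0 and every n ≥ 1, (⟨AXx,Xx⟩ / ⟨Ax,x⟩)^n ≤ ⟨AX^n x, X^n x⟩ / ⟨Ax,x⟩, provided all intermediate quantities ⟨AX^k x, X^k x⟩ are nonzero for 0 ≤ k ≤ n-1. -/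
/-!
Put `f k = re ⟪A (Xᵏ x), Xᵏ x⟫`. The intertwining relation `A X = X† A` gives
`⟪A (X v), X v⟫ = ⟪A v, X² v⟫`, so the Cauchy–Schwarz inequality for the semi-inner product
`⟪A ·, ·⟫` makes `f` log-convex: `f (k + 1)² ≤ f k * f (k + 2)`. Hence the ratios
`f (k + 1) / f k` increase, and `(f 1 / f 0)ⁿ` is bounded by their telescoping product `f n / f 0`.
-/

open scoped InnerProductSpace ComplexOrder
open ContinuousLinearMap RCLike

section LogConvexSequence

variable {f : ℕ → ℝ} (hf : ∀ k, f (k + 1) ^ 2 ≤ f k * f (k + 2))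
include hf

theorem div_le_div_succ_of_sq_le_mul {n : ℕ} (hpos : ∀ k ≤ n, 0 < f k) :
    f 1 / f 0 ≤ f (n + 1) / f n := by
  induction n with
  | zero => rfl
  | succ n ih =>
    have hn : 0 < f n := hpos n n.le_succ
    have hn1 : 0 < f (n + 1) := hpos (n + 1) le_rfl
    have hstep : f (n + 1) / f n ≤ f (n + 2) / f (n + 1) := by
      rw [div_le_div_iff₀ hn hn1]
      nlinarith [hf n]
    exact (ih fun k hk => hpos k (hk.trans n.le_succ)).trans hstep

theorem div_pow_le_div_of_sq_le_mul {n : ℕ} (hpos : ∀ k ≤ n, 0 < f k) :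
    (f 1 / f 0) ^ (n + 1) ≤ f (n + 1) / f 0 := by
  induction n with
  | zero => rw [pow_one]
  | succ n ih =>
    have h0 : 0 < f 0 := hpos 0 n.succ.zero_le
    have hn1 : 0 < f (n + 1) := hpos (n + 1) le_rfl
    calc (f 1 / f 0) ^ (n + 2) = (f 1 / f 0) ^ (n + 1) * (f 1 / f 0) := pow_succ _ _
      _ ≤ f (n + 1) / f 0 * (f (n + 2) / f (n + 1)) :=
          mul_le_mul (ih fun k hk => hpos k (hk.trans n.le_succ))
            (div_le_div_succ_of_sq_le_mul hf hpos)
            (div_nonneg (hpos 1 (by omega)).le h0.le) (div_pos hn1 h0).le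
      _ = f (n + 2) / f 0 := by field_simp

end LogConvexSequence

namespace ContinuousLinearMap

variable {𝕜 H : Type*} [RCLike 𝕜] [NormedAddCommGroup H] [InnerProductSpace 𝕜 H]
  {A X : H →L[𝕜] H}

@[reducible]
noncomputable def IsPositive.preInnerProductCore (hA : A.IsPositive) :
    PreInnerProductSpace.Core 𝕜 H where
  inner u v := ⟪A u, v⟫_𝕜
  conj_inner_symm u v := by simp only [inner_conj_symm, hA.inner_left_eq_inner_right]
  re_inner_nonneg := hA.re_inner_nonneg_left
  add_left u v w := by simp only [map_add, inner_add_left]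
  smul_left u v r := by simp only [map_smul, inner_smul_left]

theorem IsPositive.norm_inner_mul_norm_inner_le (hA : A.IsPositive) (u v : H) :
    ‖⟪A u, v⟫_𝕜‖ * ‖⟪A v, u⟫_𝕜‖ ≤ re ⟪A u, u⟫_𝕜 * re ⟪A v, v⟫_𝕜 :=
  @InnerProductSpace.Core.inner_mul_inner_self_le 𝕜 H _ _ _ hA.preInnerProductCore u v

variable [CompleteSpace H]

theorem inner_apply_apply_eq_of_comp_eq_adjoint_comp (hAX : A ∘L X = adjoint X ∘L A) (v : H) :
    ⟪A (X v), X v⟫_𝕜 = ⟪A v, X (X v)⟫_𝕜 := by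
  rw [← comp_apply, hAX, comp_apply, adjoint_inner_left]

theorem IsPositive.re_inner_apply_sq_le_s1 (hA : A.IsPositive) (hAX : A ∘L X = adjoint X ∘L A)
    (v : H) : re ⟪A (X v), X v⟫_𝕜 ^ 2 ≤ re ⟪A v, v⟫_𝕜 * re ⟪A (X (X v)), X (X v)⟫_𝕜 := by
  have hreal : ⟪A v, X (X v)⟫_𝕜 = re ⟪A (X v), X v⟫_𝕜 := by
    rw [← inner_apply_apply_eq_of_comp_eq_adjoint_comp hAX]
    exact (hA.isSymmetric.coe_re_inner_apply_self (X v)).symm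
  have hnorm : ‖⟪A v, X (X v)⟫_𝕜‖ = re ⟪A (X v), X v⟫_𝕜 := by
    rw [hreal, norm_ofReal, abs_of_nonneg (hA.re_inner_nonneg_left _)]
  have hnorm' : ‖⟪A (X (X v)), v⟫_𝕜‖ = re ⟪A (X v), X v⟫_𝕜 := by
    rw [hA.inner_left_eq_inner_right, ← inner_conj_symm, norm_conj, hnorm]
  have hcs := hA.norm_inner_mul_norm_inner_le v (X (X v))
  rwa [hnorm, hnorm', ← sq] at hcs

theorem IsPositive.re_inner_pow_apply_sq_le (hA : A.IsPositive) (hAX : A ∘L X = adjoint X ∘L A)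
    (v : H) (k : ℕ) :
    re ⟪A ((X ^ (k + 1)) v), (X ^ (k + 1)) v⟫_𝕜 ^ 2 ≤
      re ⟪A ((X ^ k) v), (X ^ k) v⟫_𝕜 * re ⟪A ((X ^ (k + 2)) v), (X ^ (k + 2)) v⟫_𝕜 := by
  simpa only [pow_succ' X, mul_apply_eq_comp] using hA.re_inner_apply_sq_le_s1 hAX ((X ^ k) v)

end ContinuousLinearMap

theorem stmt1_general {H : Type*} [NormedAddCommGroup H] [InnerProductSpace ℂ H] [CompleteSpace H]
    (A X : H →L[ℂ] H) (hA : IsSelfAdjoint A)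
    (hApos : ∀ x : H, 0 ≤ (⟪A x, x⟫_ℂ).re)
    (hsym : A ∘L X = (ContinuousLinearMap.adjoint X) ∘L A)
    (x : H) (n : ℕ) (hn : 1 ≤ n)
    (hnz : ∀ k : ℕ, k ≤ n - 1 → ⟪A ((X ^ k) x), (X ^ k) x⟫_ℂ ≠ 0) :
    ((⟪A (X x), X x⟫_ℂ).re / (⟪A x, x⟫_ℂ).re) ^ n
      ≤ (⟪A ((X ^ n) x), (X ^ n) x⟫_ℂ).re / (⟪A x, x⟫_ℂ).re := by
  have hA' : A.IsPositive := isPositive_def'.mpr ⟨hA, hApos⟩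
  obtain ⟨m, rfl⟩ := Nat.exists_eq_add_of_le' hn
  have hpos : ∀ k ≤ m, 0 < (⟪A ((X ^ k) x), (X ^ k) x⟫_ℂ).re := fun k hk =>
    (Complex.pos_iff.mp ((hA'.inner_nonneg_left _).lt_of_ne (hnz k (by omega)).symm)).1
  simpa using div_pow_le_div_of_sq_le_mul (hA'.re_inner_pow_apply_sq_le hsym x) hpos

/-- telescoping chain of quotients along iterates of `X`. -/
theorem stmt1 {H : Type*} [NormedAddCommGroup H] [InnerProductSpace ℂ H] [CompleteSpace H]
    (A X : H →L[ℂ] H) (hA : IsSelfAdjoint A)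
    (hApos : ∀ x : H, 0 ≤ (⟪A x, x⟫_ℂ).re)
    (hsym : A ∘L X = (ContinuousLinearMap.adjoint X) ∘L A)
    (x : H) (n : ℕ) (hn : 1 ≤ n)
    (hx : ⟪A x, x⟫_ℂ ≠ 0)
    (hnz : ∀ k : ℕ, k ≤ n - 1 → ⟪A ((X ^ k) x), (X ^ k) x⟫_ℂ ≠ 0) :
    ((⟪A (X x), X x⟫_ℂ).re / (⟪A x, x⟫_ℂ).re) ^ n
      ≤ (⟪A ((X ^ n) x), (X ^ n) x⟫_ℂ).re / (⟪A x, x⟫_ℂ).re :=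
  stmt1_general A X hA hApos hsym x n hn hnz
end
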